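/- arXiv:1205.1501 — 6 statements merged into one kernel-verified Lean document; each statement's English description precedes it below -/
import Mathlib

section
/- If 𝒜 is an antichain in the Boolean lattice on [n] (a family of subsets of {1,...,n} no one of which contains another), then ∑_{A∈𝒜} (n choose |A|)⁻¹ ≤ 1. -/
theorem yblm_inequality (n : ℕ) (𝒜 : Finset (Finset (Fin n)))
    (h : IsAntichain (· ⊆ ·) (𝒜 : Set (Finset (Fin n)))) :
    ∑ A ∈ 𝒜, ((n.choose A.card : ℚ))⁻¹ ≤ 1 := by
  simpa only [Fintype.card_fin] using Finset.lubell_yamamoto_meshalkin_inequality_sum_inv_choose h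
end

section
/- If a family 𝒜 of subsets of [n] contains no chain of k+1 pairwise comparable sets (i.e., 𝒜 is P_{k+1}-free), then |𝒜| is at most the sum of the k largest binomial coefficients (n choose l). -/
/-!
Grading each `A ∈ 𝒜` by the height of `A` in the poset `𝒜` splits `𝒜` into at most `k` antichains
(Mirsky), so applying the LYM inequality to each of them gives
`∑ r, #(𝒜 # r) / n.choose r ≤ k`. Since `#(𝒜 # r) ≤ n.choose r`, and the `k` middle levels carry the
`k` largest binomial coefficients, comparing with the threshold `t = n.choose m` at the bottom `m` of
the middle window turns this weighted bound into `#𝒜 ≤ ∑ r ∈ [m, m + k), n.choose r`.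
-/

open Finset

namespace Nat

theorem choose_le_choose_of_le_of_le_half {n a b : ℕ} (hab : a ≤ b) (hb : b ≤ n / 2) :
    n.choose a ≤ n.choose b := by
  induction b, hab using Nat.le_induction with
  | base => rfl
  | succ b _ ih => exact (ih (by omega)).trans (choose_le_succ_of_lt_half_left (by omega))

theorem choose_le_choose_of_le_of_add_le {n a b : ℕ} (hab : a ≤ b) (h : a + b ≤ n) :
    n.choose a ≤ n.choose b := by
  rcases le_or_gt b (n / 2) with hb | hb
  · exact choose_le_choose_of_le_of_le_half hab hb
  · rw [← choose_symm (n := n) (k := b) (by omega)]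
    exact choose_le_choose_of_le_of_le_half (by omega) (by omega)

theorem choose_le_choose_of_mem_Ico {n k m r : ℕ} (hm : 2 * m + k ≤ n + 1)
    (hr : r ∈ Finset.Ico m (m + k)) : n.choose m ≤ n.choose r := by
  rw [Finset.mem_Ico] at hr
  exact choose_le_choose_of_le_of_add_le hr.1 (by omega)

theorem choose_le_choose_of_notMem_Ico {n k m r : ℕ} (hm : 2 * m + k ≤ n + 1)
    (hm' : n ≤ 2 * m + k) (hrn : r ≤ n) (hr : r ∉ Finset.Ico m (m + k)) :
    n.choose r ≤ n.choose m := by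
  rw [Finset.mem_Ico, not_and_or, not_le, not_lt] at hr
  rcases hr with hrm | hrm
  · exact choose_le_choose_of_le_of_add_le hrm.le (by omega)
  · rw [← choose_symm hrn]
    exact choose_le_choose_of_le_of_add_le (by omega) (by omega)

end Nat

theorem Finset.sum_le_sum_of_sum_div_le_card {ι 𝕜 : Type*} [Field 𝕜] [LinearOrder 𝕜]
    [IsStrictOrderedRing 𝕜] {S T : Finset ι} {x c : ι → 𝕜} {t : 𝕜} (hST : S ⊆ T)
    (hc : ∀ i ∈ T, 0 < c i) (hx₀ : ∀ i ∈ T, 0 ≤ x i) (hxc : ∀ i ∈ S, x i ≤ c i)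
    (hS : ∀ i ∈ S, t ≤ c i) (hT : ∀ i ∈ T, i ∉ S → c i ≤ t) (ht : 0 ≤ t)
    (hsum : ∑ i ∈ T, x i / c i ≤ #S) :
    ∑ i ∈ T, x i ≤ ∑ i ∈ S, c i := by
  classical
  have pointwise : ∀ i ∈ T,
      x i - (if i ∈ S then c i else 0) ≤ t * (x i / c i - if i ∈ S then 1 else 0) := by
    intro i hi
    have hci := hc i hi
    split_ifs with hiS
    · have hy : x i / c i - 1 ≤ 0 := sub_nonpos.2 ((div_le_one hci).2 (hxc i hiS))
      calc x i - c i = c i * (x i / c i - 1) := by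
            rw [mul_sub, mul_div_cancel₀ _ hci.ne', mul_one]
        _ ≤ t * (x i / c i - 1) := mul_le_mul_of_nonpos_right (hS i hiS) hy
    · have hy : 0 ≤ x i / c i - 0 := by rw [sub_zero]; exact div_nonneg (hx₀ i hi) hci.le
      calc x i - 0 = c i * (x i / c i - 0) := by
            rw [sub_zero, sub_zero, mul_div_cancel₀ _ hci.ne']
        _ ≤ t * (x i / c i - 0) := mul_le_mul_of_nonneg_right (hT i hi hiS) hy
  have : ∑ i ∈ T, x i - ∑ i ∈ S, c i ≤ t * (∑ i ∈ T, x i / c i - #S) := calc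
    _ = ∑ i ∈ T, (x i - if i ∈ S then c i else 0) := by
      rw [sum_sub_distrib, sum_ite_mem, inter_eq_right.2 hST]
    _ ≤ ∑ i ∈ T, t * (x i / c i - if i ∈ S then 1 else 0) := sum_le_sum pointwise
    _ = t * (∑ i ∈ T, x i / c i - #S) := by
      rw [← mul_sum, sum_sub_distrib, sum_ite_mem, inter_eq_right.2 hST, sum_const, nsmul_one]
  linarith [mul_nonpos_of_nonneg_of_nonpos ht (sub_nonpos.2 hsum)]

theorem StrictMonoOn.isAntichain_filter_eq {α β : Type*} [PartialOrder α] [Preorder β]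
    [DecidableEq β] {s : Finset α} {f : α → β} (hf : StrictMonoOn f s) (b : β) :
    IsAntichain (· ≤ ·) (s.filter (f · = b) : Set α) := by
  intro a ha a' ha' hne hle
  simp only [coe_filter, Set.mem_ofPred_eq] at ha ha'
  exact (hf ha.1 ha'.1 (lt_of_le_of_ne hle hne)).ne (ha.2.trans ha'.2.symm)

theorem Finset.exists_strictMonoOn_lt_of_not_exists_isChain {α : Type*} [PartialOrder α]
    {s : Finset α} {k : ℕ} (h : ¬ ∃ t ⊆ s, #t = k + 1 ∧ IsChain (· ≤ ·) (t : Set α)) :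
    ∃ f : α → ℕ, StrictMonoOn f s ∧ ∀ a ∈ s, f a < k := by
  classical
  have height_lt : ∀ a : s, Order.height a < k := by
    intro a
    by_contra! hka
    obtain ⟨p, -, hp⟩ := Order.exists_series_of_le_height a hka
    refine h ⟨univ.image fun i => (p i : α), fun _ hb => ?_, ?_, ?_⟩
    · obtain ⟨i, -, rfl⟩ := mem_image.1 hb
      exact (p i).2
    · have hinj : Function.Injective fun i => (p i : α) :=
        fun i j hij => p.strictMono.injective (Subtype.val_injective hij)
      rw [card_image_of_injective _ hinj, card_univ, Fintype.card_fin, hp]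
    · rw [coe_image, coe_univ, Set.image_univ]
      exact ((Subtype.mono_coe _).comp p.strictMono.monotone).isChain_range
  have height_toNat : ∀ a : s, ((Order.height a).toNat : ℕ∞) = Order.height a :=
    fun a => ENat.natCast_toNat (ne_top_of_lt (height_lt a))
  refine ⟨fun a => if ha : a ∈ s then (Order.height (⟨a, ha⟩ : s)).toNat else 0, ?_, ?_⟩
  · intro a ha b hb hab
    simp only [mem_coe] at ha hb
    have := Order.height_strictMono (show (⟨a, ha⟩ : s) < ⟨b, hb⟩ from hab)
      (ne_top_of_lt (height_lt _)).lt_top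
    rw [← height_toNat ⟨a, ha⟩, ← height_toNat ⟨b, hb⟩, Nat.cast_lt] at this
    simpa only [dif_pos ha, dif_pos hb] using this
  · intro a ha
    simp only [dif_pos ha]
    rw [← Nat.cast_lt (α := ℕ∞), height_toNat]
    exact height_lt _

section LYM

variable {𝕜 α : Type*} [Semifield 𝕜] [LinearOrder 𝕜] [IsStrictOrderedRing 𝕜] [Fintype α]
  {𝒜 : Finset (Finset α)} {k : ℕ}

theorem Finset.sum_inv_choose_le_of_not_exists_isChain
    (h : ¬ ∃ 𝒞 ⊆ 𝒜, #𝒞 = k + 1 ∧ IsChain (· ⊆ ·) (𝒞 : Set (Finset α))) :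
    ∑ s ∈ 𝒜, ((Fintype.card α).choose #s : 𝕜)⁻¹ ≤ k := by
  classical
  obtain ⟨f, hf, hfk⟩ := exists_strictMonoOn_lt_of_not_exists_isChain h
  calc ∑ s ∈ 𝒜, ((Fintype.card α).choose #s : 𝕜)⁻¹
      = ∑ j ∈ range k, ∑ s ∈ 𝒜 with f s = j, ((Fintype.card α).choose #s : 𝕜)⁻¹ :=
        (sum_fiberwise_of_maps_to (fun s hs => mem_range.2 (hfk s hs)) _).symm
    _ ≤ ∑ _j ∈ range k, 1 := sum_le_sum fun j _ =>
        lubell_yamamoto_meshalkin_inequality_sum_inv_choose (hf.isAntichain_filter_eq j)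
    _ = k := by simp

theorem Finset.sum_card_slice_div_choose_le_of_not_exists_isChain
    (h : ¬ ∃ 𝒞 ⊆ 𝒜, #𝒞 = k + 1 ∧ IsChain (· ⊆ ·) (𝒞 : Set (Finset α))) :
    ∑ r ∈ range (Fintype.card α + 1), (#(𝒜 # r) / (Fintype.card α).choose r : 𝕜) ≤ k := by
  calc ∑ r ∈ range (Fintype.card α + 1), (#(𝒜 # r) / (Fintype.card α).choose r : 𝕜)
      = ∑ r ∈ range (Fintype.card α + 1), ∑ s ∈ 𝒜 with #s = r,
          ((Fintype.card α).choose #s : 𝕜)⁻¹ := by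
        refine sum_congr rfl fun r _ => ?_
        rw [sum_congr rfl fun s hs => by rw [(mem_filter.1 hs).2], sum_const, nsmul_eq_mul,
          div_eq_mul_inv, slice]
    _ = ∑ s ∈ 𝒜, ((Fintype.card α).choose #s : 𝕜)⁻¹ :=
        sum_fiberwise_of_maps_to (fun s _ => mem_range.2 (Nat.lt_succ_of_le s.card_le_univ)) _
    _ ≤ k := sum_inv_choose_le_of_not_exists_isChain h

end LYM

theorem erdos_chain_free_general (n k : ℕ) (hkn : k ≤ n + 1)
    (𝒜 : Finset (Finset (Fin n)))
    (h : ¬ ∃ 𝒞 : Finset (Finset (Fin n)), 𝒞 ⊆ 𝒜 ∧ 𝒞.card = k + 1 ∧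
      IsChain (· ⊆ ·) (𝒞 : Set (Finset (Fin n)))) :
    𝒜.card ≤ ∑ i ∈ Finset.range k, n.choose ((n - k + 1) / 2 + i) := by
  set m := (n - k + 1) / 2
  have hLYM := sum_card_slice_div_choose_le_of_not_exists_isChain (𝕜 := ℚ) h
  rw [Fintype.card_fin, show (k : ℚ) = #(Ico m (m + k)) by simp] at hLYM
  have key := sum_le_sum_of_sum_div_le_card (x := fun r => (#(𝒜 # r) : ℚ))
    (c := fun r => (n.choose r : ℚ)) (t := n.choose m)
    (fun r hr => mem_range.2 (by have := mem_Ico.1 hr; omega))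
    (fun r hr => Nat.cast_pos.2 (Nat.choose_pos (Nat.lt_succ_iff.1 (mem_range.1 hr))))
    (fun _ _ => by positivity)
    (fun r _ => by simpa using Nat.cast_le (α := ℚ) |>.2 (sized_slice (𝒜 := 𝒜) (r := r)).card_le)
    (fun r hr => Nat.cast_le.2 (Nat.choose_le_choose_of_mem_Ico (by omega) hr))
    (fun r hr hrS => Nat.cast_le.2 <| Nat.choose_le_choose_of_notMem_Ico (by omega) (by omega)
      (Nat.lt_succ_iff.1 (mem_range.1 hr)) hrS)
    (by positivity) hLYM
  have hcard : ∑ r ∈ range (n + 1), #(𝒜 # r) = #𝒜 := by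
    simpa [Nat.range_succ_eq_Iic] using sum_card_slice 𝒜
  rw [sum_Ico_eq_sum_range, Nat.add_sub_cancel_left] at key
  rw [← hcard]
  exact_mod_cast key

theorem erdos_chain_free (n k : ℕ) (hk : 1 ≤ k) (hkn : k ≤ n + 1)
    (𝒜 : Finset (Finset (Fin n)))
    (h : ¬ ∃ 𝒞 : Finset (Finset (Fin n)), 𝒞 ⊆ 𝒜 ∧ 𝒞.card = k + 1 ∧
      IsChain (· ⊆ ·) (𝒞 : Set (Finset (Fin n)))) :
    𝒜.card ≤ ∑ i ∈ Finset.range k, n.choose ((n - k + 1) / 2 + i) :=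
  erdos_chain_free_general n k hkn 𝒜 h
end

section
/- For real numbers x with 2/3 ≤ x ≤ 1, the function g(x) = −1/3 + x³/3 + (1−x)·x·(4−2x)/3 satisfies g(x) ≤ 0, with equality if and only if x = 1. -/
theorem g_hpar_nonpos (x : ℝ) (h1 : 2/3 ≤ x) (h2 : x ≤ 1) :
    (-1/3 + x^3/3 + (1 - x) * x * (4 - 2*x) / 3 ≤ 0) ∧
    (-1/3 + x^3/3 + (1 - x) * x * (4 - 2*x) / 3 = 0 ↔ x = 1) := by
  have key : -1/3 + x^3/3 + (1 - x) * x * (4 - 2*x) / 3 = (x - 1) * (3*x^2 - 3*x + 1) / 3 := by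
    ring
  have hpos : 3*x^2 - 3*x + 1 > 0 := by nlinarith [sq_nonneg (2*x - 1)]
  constructor
  · rw [key]
    have : x - 1 ≤ 0 := by linarith
    nlinarith
  · rw [key]
    constructor
    · intro h
      have : (x - 1) * (3*x^2 - 3*x + 1) = 0 := by linarith
      rcases mul_eq_zero.1 this with h' | h'
      · linarith
      · linarith
    · intro h; rw [h]; ring
end

section
/- For real numbers x with 2/3 ≤ x ≤ 1, the function g(x) = −1/4 + x³/4 + (1−x)·x·(2−x)/2 satisfies g(x) ≤ 0, with equality if and only if x = 1. -/
theorem g_triangle_nonpos (x : ℝ) (h1 : 2/3 ≤ x) (h2 : x ≤ 1) :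
    (-1/4 + x^3/4 + (1 - x) * x * (2 - x) / 2 ≤ 0) ∧
    (-1/4 + x^3/4 + (1 - x) * x * (2 - x) / 2 = 0 ↔ x = 1) := by
  have key : -1/4 + x^3/4 + (1 - x) * x * (2 - x) / 2 = (x - 1) * (3*x^2 - 3*x + 1) / 4 := by ring
  have hq : 3*x^2 - 3*x + 1 > 0 := by nlinarith [sq_nonneg (2*x - 1)]
  constructor
  · rw [key]; nlinarith
  · rw [key]
    constructor
    · intro h
      have : (x - 1) * (3*x^2 - 3*x + 1) = 0 := by linarith
      rcases mul_eq_zero.mp this with h' | h'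
      · linarith
      · linarith
    · intro h; rw [h]; ring
end

section
/- For real numbers x with 2/3 ≤ x ≤ 1, g(x) = −5/24 + x³/6 + ((1−x)x/6)·max(5−5x, 10x−7) ≤ −1/24, with maximum attained at x = 1. -/
/-! Multiplying by 6, `g(x) + 1/24` becomes `(x - 1)(6x² - 4x + 1)` when the maximum is `5 - 5x`
and `-(x - 1)²(9x + 1)` when it is `10x - 7`. Both are nonpositive for `-1/9 ≤ x ≤ 1`, since
`6x² - 4x + 1 = (2/3)(3x - 1)² + 1/3 > 0`, and both vanish at `x = 1`. -/

lemma branch_five_sub_le {x : ℝ} (hx : x ≤ 1) :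
    -5/24 + x^3/6 + ((1 - x) * x / 6) * (5 - 5*x) ≤ -1/24 := by
  have hquad : 0 ≤ 6*x^2 - 4*x + 1 := by nlinarith [sq_nonneg (3*x - 1)]
  have hprod : (x - 1) * (6*x^2 - 4*x + 1) ≤ 0 :=
    mul_nonpos_of_nonpos_of_nonneg (by linarith) hquad
  calc -5/24 + x^3/6 + ((1 - x) * x / 6) * (5 - 5*x)
      = -1/24 + (x - 1) * (6*x^2 - 4*x + 1) / 6 := by ring
    _ ≤ -1/24 := by linarith

lemma branch_ten_sub_le {x : ℝ} (hx : -1/9 ≤ x) :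
    -5/24 + x^3/6 + ((1 - x) * x / 6) * (10*x - 7) ≤ -1/24 := by
  have hprod : 0 ≤ (x - 1)^2 * (9*x + 1) :=
    mul_nonneg (sq_nonneg _) (by linarith)
  calc -5/24 + x^3/6 + ((1 - x) * x / 6) * (10*x - 7)
      = -1/24 - (x - 1)^2 * (9*x + 1) / 6 := by ring
    _ ≤ -1/24 := by linarith

theorem g_hone_bound :
    (∀ x : ℝ, 2/3 ≤ x → x ≤ 1 →
      -5/24 + x^3/6 + ((1 - x) * x / 6) * max (5 - 5*x) (10*x - 7) ≤ -1/24) ∧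
    (-5/24 + (1:ℝ)^3/6 + ((1 - 1) * 1 / 6) * max (5 - 5*1) (10*1 - 7) = -1/24) := by
  refine ⟨fun x hlow hhigh => ?_, by norm_num⟩
  rcases max_choice (5 - 5*x) (10*x - 7) with hmax | hmax <;> rw [hmax]
  · exact branch_five_sub_le hhigh
  · exact branch_ten_sub_le (by linarith)
end

section
/- For real numbers x with 2/3 ≤ x ≤ 1, g(x) = −5/24 + x³/12 + ((1−x)x/6)·max(5−4x, 6x−4) ≤ −7/72, with maximum attained at x = 2/3. -/
theorem g_hwedge_bound :
    (∀ x : ℝ, 2/3 ≤ x → x ≤ 1 →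
      -5/24 + x^3/12 + ((1 - x) * x / 6) * max (5 - 4*x) (6*x - 4) ≤ -7/72) ∧
    (-5/24 + ((2:ℝ)/3)^3/12 + ((1 - 2/3) * (2/3) / 6) * max (5 - 4*(2/3)) (6*(2/3) - 4)
      = -7/72) := by
  constructor
  · intro x h1 h2
    rcases le_total (6*x - 4) (5 - 4*x) with h | h
    · rw [max_eq_left h]
      nlinarith [sq_nonneg (x - 2/3), sq_nonneg (x - 1), sq_nonneg x]
    · rw [max_eq_right h]
      nlinarith [sq_nonneg (x - 2/3), sq_nonneg (x - 1), sq_nonneg (x - 9/10)]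
  · rw [max_eq_left (by norm_num)]
    norm_num
end
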